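/- arXiv:2009.06743 — 6 statements merged into one kernel-verified Lean document; each statement's English description precedes it below -/
import Mathlib

section
/- The symmetric functional equation B(1-s)·Γ(s/2+1)·π^{-s/2} = B(s)·Γ((1-s)/2+1)·π^{-(1-s)/2} holds for all complex s where both sides are defined. -/
/-!
Both sides are multiples of the completed zeta function `ξ = Γℝ · ζ`, where
`Γℝ(s) = π^{-s/2} Γ(s/2)`: since `Γ(s/2 + 1) = (s/2) Γ(s/2)`, the left side is
`-(1-s)(s/2) ξ(s)` and the right side is `-s((1-s)/2) ξ(1-s)`, and `ξ(1-s) = ξ(s)`.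
-/

open Complex

theorem riemannZeta_mul_Gamma_div_two_add_one_mul_pi_cpow {s : ℂ}
    (hs : ∀ n : ℕ, s ≠ -(2 * n)) :
    riemannZeta s * Gamma (s / 2 + 1) * (Real.pi : ℂ) ^ (-s / 2) =
      s / 2 * completedRiemannZeta s := by
  have hs0 : s ≠ 0 := by simpa using hs 0
  have hΓℝ : Gammaℝ s ≠ 0 := fun h ↦
    let ⟨n, hn⟩ := Gammaℝ_eq_zero_iff.mp h
    hs n hn
  rw [Gamma_add_one _ (div_ne_zero hs0 two_ne_zero), riemannZeta_def_of_ne_zero hs0]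
  calc completedRiemannZeta s / Gammaℝ s * (s / 2 * Gamma (s / 2)) * (Real.pi : ℂ) ^ (-s / 2)
      = s / 2 * (completedRiemannZeta s / Gammaℝ s * Gammaℝ s) := by rw [Gammaℝ_def]; ring
    _ = s / 2 * completedRiemannZeta s := by rw [div_mul_cancel₀ _ hΓℝ]

theorem forall_ne_neg_two_mul_natCast {s : ℂ} (h0 : s ≠ 0)
    (h : ∀ n : ℕ, s ≠ -2 * ((n : ℂ) + 1)) : ∀ n : ℕ, s ≠ -(2 * n)
  | 0 => by simpa using h0
  | n + 1 => by simpa [neg_mul] using h n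

/-- The symmetric functional equation
`B(1-s)·Γ(s/2+1)·π^{-s/2} = B(s)·Γ((1-s)/2+1)·π^{-(1-s)/2}`, where `B(s) = -s·ζ(1-s)`,
for all complex `s` where both sides are defined. -/
theorem bernoulliFunction_symmetric_functional_equation (s : ℂ) (h0 : s ≠ 0) (h1 : s ≠ 1)
    (h2 : ∀ n : ℕ, s ≠ -2 * ((n : ℂ) + 1)) (h3 : ∀ n : ℕ, s ≠ 2 * (n : ℂ) + 3) :
    (-(1 - s) * riemannZeta (1 - (1 - s))) * Complex.Gamma (s / 2 + 1) *
        (Real.pi : ℂ) ^ (-s / 2) =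
      (-s * riemannZeta (1 - s)) * Complex.Gamma ((1 - s) / 2 + 1) *
        (Real.pi : ℂ) ^ (-(1 - s) / 2) := by
  have hs := forall_ne_neg_two_mul_natCast h0 h2
  have h1s := forall_ne_neg_two_mul_natCast (sub_ne_zero.mpr h1.symm)
    fun n hn ↦ h3 n (by linear_combination -hn)
  rw [sub_sub_cancel]
  linear_combination -(1 - s) * riemannZeta_mul_Gamma_div_two_add_one_mul_pi_cpow hs +
    s * riemannZeta_mul_Gamma_div_two_add_one_mul_pi_cpow h1s +
    s * (1 - s) / 2 * completedRiemannZeta_one_sub s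
end

section
/- For every nonnegative integer n, the Genocchi polynomial G_n(x) = 2^n·(B_n(x/2) - B_n((x+1)/2)) satisfies G_n(x) = 2·(B_n(x) - B^c_n(x)), where B^c_n is the n-th central Bernoulli polynomial. -/
/-!
Everything follows from the generating function `∑ Bₙ(t) Xⁿ/n! = X e^{tX} / (e^X - 1)`.
Multiplying it by `e^{yX}` gives the addition formula `Bₙ(x + y) = ∑ C(n,k) B_k(x) y^{n-k}`,
which identifies `B^c_n(x)` with `2ⁿ Bₙ((x + 1)/2)`. Since `e^{2X} - 1 = (e^X - 1)(e^X + 1)`, it also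
gives the duplication formula `2ⁿ (Bₙ(x/2) + Bₙ((x + 1)/2)) = 2 Bₙ(x)`, and the theorem is a
rearrangement of the two.
-/

/-- The central Bernoulli numbers `B^c_n = 2^n·B_n(1/2)`. -/
noncomputable def centralBernoulli (n : ℕ) : ℚ :=
  2 ^ n * (Polynomial.bernoulli n).eval (1 / 2)

/-- The central Bernoulli polynomials `B^c_n(x) = Σ_{k=0}^n C(n,k)·B^c_k·x^{n-k}`. -/
noncomputable def centralBernoulliPoly (n : ℕ) (x : ℚ) : ℚ :=
  ∑ k ∈ Finset.range (n + 1), (n.choose k : ℚ) * centralBernoulli k * x ^ (n - k)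

open PowerSeries
open scoped Nat

namespace PowerSeries

variable (A : Type*) [CommRing A] [Algebra ℚ A]

theorem exp_sub_one_ne_zero [Nontrivial A] : exp A - 1 ≠ 0 := by
  intro h
  simpa [coeff_exp] using congrArg (coeff 1) h

theorem rescale_two_exp_sub_one : rescale (2 : A) (exp A - 1) = (exp A - 1) * (exp A + 1) := by
  have h := exp_mul_exp_eq_exp_add (1 : A) 1
  rw [rescale_one, one_add_one_eq_two] at h
  rw [map_sub, map_one, ← h, RingHom.id_apply]
  ring

end PowerSeries

namespace Polynomial

noncomputable def bernoulliGenFun (t : ℚ) : ℚ⟦X⟧ :=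
  PowerSeries.mk fun n => (bernoulli n).eval t / n !

theorem coeff_bernoulliGenFun (t : ℚ) (n : ℕ) :
    PowerSeries.coeff n (bernoulliGenFun t) = (bernoulli n).eval t / n ! :=
  coeff_mk _ _

theorem bernoulliGenFun_mul_exp_sub_one (t : ℚ) :
    bernoulliGenFun t * (exp ℚ - 1) = PowerSeries.X * rescale t (exp ℚ) := by
  convert bernoulli_generating_function t using 2
  ext n
  simp [div_eq_inv_mul, bernoulliGenFun]

theorem bernoulliGenFun_add (x y : ℚ) :
    bernoulliGenFun (x + y) = bernoulliGenFun x * rescale y (exp ℚ) := by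
  apply mul_right_cancel₀ (exp_sub_one_ne_zero ℚ)
  rw [bernoulliGenFun_mul_exp_sub_one, mul_right_comm, bernoulliGenFun_mul_exp_sub_one, mul_assoc,
    exp_mul_exp_eq_exp_add]

theorem bernoulli_eval_add (n : ℕ) (x y : ℚ) :
    (bernoulli n).eval (x + y) =
      ∑ k ∈ Finset.range (n + 1), n.choose k * (bernoulli k).eval x * y ^ (n - k) := by
  have h := congrArg (PowerSeries.coeff n) (bernoulliGenFun_add x y)
  rw [PowerSeries.coeff_mul, Finset.Nat.sum_antidiagonal_eq_sum_range_succ_mk] at h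
  simp only [coeff_bernoulliGenFun, coeff_rescale, coeff_exp, Algebra.algebraMap_self,
    RingHom.id_apply] at h
  rw [div_eq_iff (by positivity)] at h
  rw [h, Finset.sum_mul]
  refine Finset.sum_congr rfl fun k hk => ?_
  rw [Nat.cast_choose ℚ (Finset.mem_range_succ_iff.mp hk)]
  field_simp

theorem bernoulliGenFun_duplication (x : ℚ) :
    rescale 2 (bernoulliGenFun (x / 2)) + rescale 2 (bernoulliGenFun ((x + 1) / 2)) =
      2 * bernoulliGenFun x := by
  have hne : (exp ℚ - 1) * (exp ℚ + 1) ≠ 0 := by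
    refine mul_ne_zero (exp_sub_one_ne_zero ℚ) fun h => ?_
    simpa using congrArg PowerSeries.constantCoeff h
  have hshift : rescale x (exp ℚ) * exp ℚ = rescale (x + 1) (exp ℚ) := by
    rw [← exp_mul_exp_eq_exp_add, rescale_one, RingHom.id_apply]
  apply mul_right_cancel₀ hne
  rw [← rescale_two_exp_sub_one, add_mul, ← map_mul, ← map_mul, bernoulliGenFun_mul_exp_sub_one,
    bernoulliGenFun_mul_exp_sub_one, map_mul, map_mul, rescale_X, rescale_rescale, rescale_rescale,
    rescale_two_exp_sub_one, ← mul_assoc, mul_assoc 2, bernoulliGenFun_mul_exp_sub_one,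
    show x / 2 * 2 = x by ring, show (x + 1) / 2 * 2 = x + 1 by ring, ← hshift, map_ofNat]
  ring

theorem bernoulli_duplication (n : ℕ) (x : ℚ) :
    2 ^ n * ((bernoulli n).eval (x / 2) + (bernoulli n).eval ((x + 1) / 2)) =
      2 * (bernoulli n).eval x := by
  have h := congrArg (PowerSeries.coeff n) (bernoulliGenFun_duplication x)
  rw [map_add, ← map_ofNat PowerSeries.C 2, PowerSeries.coeff_C_mul] at h
  simp only [coeff_rescale, coeff_bernoulliGenFun] at h
  field_simp at h
  linear_combination h

end Polynomial

theorem centralBernoulliPoly_eq_two_pow_mul_bernoulli_eval (n : ℕ) (x : ℚ) :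
    centralBernoulliPoly n x = 2 ^ n * (Polynomial.bernoulli n).eval ((x + 1) / 2) := by
  rw [show (x + 1) / 2 = 1 / 2 + x / 2 by ring, Polynomial.bernoulli_eval_add, Finset.mul_sum]
  refine Finset.sum_congr rfl fun k hk => ?_
  rw [centralBernoulli, ← pow_mul_pow_sub 2 (Finset.mem_range_succ_iff.mp hk), div_pow]
  field_simp

/-- The Genocchi polynomial `G_n(x) = 2^n·(B_n(x/2) - B_n((x+1)/2))` satisfies
`G_n(x) = 2·(B_n(x) - B^c_n(x))`. -/
theorem genocchiPoly_eq (n : ℕ) (x : ℚ) :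
    2 ^ n * ((Polynomial.bernoulli n).eval (x / 2) -
        (Polynomial.bernoulli n).eval ((x + 1) / 2)) =
      2 * ((Polynomial.bernoulli n).eval x - centralBernoulliPoly n x) := by
  rw [centralBernoulliPoly_eq_two_pow_mul_bernoulli_eval]
  linear_combination Polynomial.bernoulli_duplication n x
end

section
/- For every integer n ≥ 0, the Genocchi number G_n = 2·(1 - 2^n)·B_n(1) is an integer, where B_n(1) is the n-th Bernoulli number with B_1(1) = 1/2. -/
/-!
By von Staudt–Clausen, `B_{2k} + ∑ 1/p` is an integer, the sum running over the primes `p` with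
`p - 1 ∣ 2k`. Each such `p` divides `2 (2^{2k} - 1)`: for `p = 2` through the factor `2`, otherwise
by Fermat's little theorem. Hence `G_{2k} = -2 (2^{2k} - 1) B_{2k}` is an integer. For odd `n > 1`
the Bernoulli number vanishes, and `G_1 = -1`.
-/

open Finset

theorem Int.prime_dvd_mul_pow_sub_one {p m : ℕ} (hp : p.Prime) (hpm : p - 1 ∣ m) (a : ℤ) :
    (p : ℤ) ∣ a * (a ^ m - 1) := by
  have := Fact.mk hp
  rw [← ZMod.intCast_zmod_eq_zero_iff_dvd]
  push_cast
  by_cases ha : (a : ZMod p) = 0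
  · rw [ha, zero_mul]
  · obtain ⟨d, rfl⟩ := hpm
    rw [pow_mul, ZMod.pow_card_sub_one_eq_one ha, one_pow, sub_self, mul_zero]

theorem intCast_mul_bernoulli_mem_bot {c : ℤ} {k : ℕ}
    (hc : ∀ p : ℕ, p.Prime → p - 1 ∣ 2 * k → (p : ℤ) ∣ c) :
    (c : ℚ) * bernoulli (2 * k) ∈ (⊥ : Subring ℚ) := by
  set P := {p ∈ range (2 * k + 2) | p.Prime ∧ p - 1 ∣ 2 * k}
  have hvsc : bernoulli (2 * k) + ∑ p ∈ P, (1 : ℚ) / p ∈ (⊥ : Subring ℚ) :=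
    Subring.mem_bot.mpr (Bernoulli.vonStaudt_clausen k)
  have hterm : ∀ p ∈ P, (c : ℚ) * (1 / p) ∈ (⊥ : Subring ℚ) := by
    intro p hp
    obtain ⟨-, hprime, hpk⟩ := mem_filter.mp hp
    obtain ⟨q, rfl⟩ := hc p hprime hpk
    have hp0 : (p : ℚ) ≠ 0 := by exact_mod_cast hprime.ne_zero
    refine Subring.mem_bot.mpr ⟨q, ?_⟩
    push_cast
    field_simp
  have hsplit : (c : ℚ) * bernoulli (2 * k)
      = c * (bernoulli (2 * k) + ∑ p ∈ P, (1 : ℚ) / p) - ∑ p ∈ P, (c : ℚ) * (1 / p) := by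
    rw [mul_add, ← mul_sum]; ring
  rw [hsplit]
  exact sub_mem (mul_mem (intCast_mem _ c) hvsc) (sum_mem hterm)

/-- The Genocchi number `G_n = 2·(1 - 2^n)·B_n(1)` is an integer for every `n ≥ 0`,
where `B_n(1)` is the `n`-th Bernoulli number (with `B_1(1) = 1/2`). -/
theorem genocchi_number_is_integer (n : ℕ) :
    ∃ g : ℤ, (g : ℚ) = 2 * (1 - 2 ^ n) * (Polynomial.bernoulli n).eval 1 := by
  rw [Polynomial.bernoulli_eval_one]
  obtain ⟨k, rfl | rfl⟩ := n.even_or_odd'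
  · rw [← bernoulli_eq_bernoulli'_of_ne_one (by omega)]
    obtain ⟨g, hg⟩ := Subring.mem_bot.mp <| intCast_mul_bernoulli_mem_bot
      fun p hp hpk ↦ Int.prime_dvd_mul_pow_sub_one hp hpk 2
    exact ⟨-g, by push_cast [hg]; ring⟩
  · rcases k.eq_zero_or_pos with rfl | hk
    · exact ⟨-1, by norm_num⟩
    · refine ⟨0, ?_⟩
      rw [bernoulli'_eq_zero_of_odd (odd_two_mul_add_one k) (by omega)]
      simp
end

section
/- Worpitzky's representation: for every integer m ≥ 0, the Bernoulli number B_m (with B_1 = +1/2) equals Σ_{n=0}^m (1/(n+1))·Σ_{k=0}^n (-1)^{m-k}·C(n,k)·k^m. -/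
open Finset

private def Dw (n m : ℕ) : ℚ :=
  ∑ k ∈ range (n + 1), (-1 : ℚ) ^ k * (n.choose k : ℚ) * (k : ℚ) ^ m

private def Ew (n m : ℕ) : ℚ :=
  ∑ k ∈ range (n + 1), (-1 : ℚ) ^ k * (n.choose k : ℚ) * ((k : ℚ) + 1) ^ m

private lemma pascalD (n m : ℕ) : Dw (n + 1) m = Dw n m - Ew n m := by
  unfold Dw Ew
  rw [Finset.sum_range_succ'
    (fun k => (-1 : ℚ) ^ k * ((n + 1).choose k : ℚ) * (k : ℚ) ^ m) (n + 1)]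
  have h1 : ∀ j ∈ range (n + 1),
      (-1 : ℚ) ^ (j + 1) * ((n + 1).choose (j + 1) : ℚ) * ((j + 1 : ℕ) : ℚ) ^ m
        = -((-1 : ℚ) ^ j * (n.choose j : ℚ) * ((j : ℚ) + 1) ^ m)
          + (-1 : ℚ) ^ (j + 1) * (n.choose (j + 1) : ℚ) * ((j + 1 : ℕ) : ℚ) ^ m := by
    intro j _
    rw [Nat.choose_succ_succ, Nat.cast_add]
    push_cast
    ring
  rw [Finset.sum_congr rfl h1, Finset.sum_add_distrib]
  have h2 : ∑ j ∈ range (n + 1),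
        (-1 : ℚ) ^ (j + 1) * (n.choose (j + 1) : ℚ) * ((j + 1 : ℕ) : ℚ) ^ m
      = (∑ k ∈ range (n + 1), (-1 : ℚ) ^ k * (n.choose k : ℚ) * (k : ℚ) ^ m)
        - (-1 : ℚ) ^ 0 * (n.choose 0 : ℚ) * ((0 : ℕ) : ℚ) ^ m := by
    have h3 := Finset.sum_range_succ'
      (fun k => (-1 : ℚ) ^ k * (n.choose k : ℚ) * (k : ℚ) ^ m) (n + 1)
    have h4 : ∑ k ∈ range (n + 1 + 1), (-1 : ℚ) ^ k * (n.choose k : ℚ) * (k : ℚ) ^ m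
        = ∑ k ∈ range (n + 1), (-1 : ℚ) ^ k * (n.choose k : ℚ) * (k : ℚ) ^ m := by
      rw [Finset.sum_range_succ]
      simp
    rw [h4] at h3
    linarith
  rw [h2]
  have h5 : ∑ j ∈ range (n + 1), -((-1 : ℚ) ^ j * (n.choose j : ℚ) * ((j : ℚ) + 1) ^ m)
      = -∑ j ∈ range (n + 1), (-1 : ℚ) ^ j * (n.choose j : ℚ) * ((j : ℚ) + 1) ^ m := by
    rw [Finset.sum_neg_distrib]
  rw [h5]
  simp only [Nat.choose_zero_right, Nat.cast_one, Nat.cast_zero, pow_zero, one_mul, mul_one]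
  ring

private lemma EbinomW (n m : ℕ) :
    Ew n m = ∑ j ∈ range (m + 1), (m.choose j : ℚ) * Dw n j := by
  unfold Dw Ew
  have h : ∀ k ∈ range (n + 1),
      (-1 : ℚ) ^ k * (n.choose k : ℚ) * ((k : ℚ) + 1) ^ m
        = ∑ j ∈ range (m + 1),
            (m.choose j : ℚ) * ((-1 : ℚ) ^ k * (n.choose k : ℚ) * (k : ℚ) ^ j) := by
    intro k _
    rw [add_pow, Finset.mul_sum]
    apply Finset.sum_congr rfl
    intro j _
    ring
  rw [Finset.sum_congr rfl h, Finset.sum_comm]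
  apply Finset.sum_congr rfl
  intro j _
  rw [Finset.mul_sum]

private lemma Dvanish : ∀ n m, m < n → Dw n m = 0 := by
  intro n
  induction n with
  | zero => intro m h; omega
  | succ n ih =>
    intro m hm
    rw [pascalD, EbinomW, Finset.sum_range_succ, Nat.choose_self]
    have hrest : ∑ j ∈ range m, (m.choose j : ℚ) * Dw n j = 0 := by
      apply Finset.sum_eq_zero
      intro j hj
      rw [Finset.mem_range] at hj
      rw [ih j (by omega)]
      ring
    rw [hrest]
    simp

private lemma key2 (n m : ℕ) : Dw (n + 1) (m + 1) = -((n : ℚ) + 1) * Ew n m := by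
  unfold Dw Ew
  rw [Finset.sum_range_succ'
    (fun k => (-1 : ℚ) ^ k * ((n + 1).choose k : ℚ) * (k : ℚ) ^ (m + 1)) (n + 1)]
  have h0 : (-1 : ℚ) ^ 0 * ((n + 1).choose 0 : ℚ) * ((0 : ℕ) : ℚ) ^ (m + 1) = 0 := by
    simp
  rw [h0, add_zero, Finset.mul_sum]
  apply Finset.sum_congr rfl
  intro j _
  have hc : ((n : ℚ) + 1) * (n.choose j : ℚ) = ((n + 1).choose (j + 1) : ℚ) * ((j : ℚ) + 1) := by
    exact_mod_cast Nat.add_one_mul_choose_eq n j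
  push_cast
  linear_combination ((-1 : ℚ) ^ j * ((j : ℚ) + 1) ^ m) * hc

private lemma telescope (N m : ℕ) :
    ∑ n ∈ range N, Ew n m = Dw 0 m - Dw N m := by
  induction N with
  | zero => simp
  | succ N ih =>
    rw [Finset.sum_range_succ, ih, pascalD]
    ring

private def gw (m : ℕ) : ℚ := ∑ n ∈ range (m + 1), (1 / ((n : ℚ) + 1)) * Dw n m

private lemma Gsum (N : ℕ) :
    ∑ m ∈ range N, (N.choose m : ℚ) * gw m = if N = 1 then 1 else 0 := by
  cases N with
  | zero => simp
  | succ M =>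
    have hg : ∀ m ∈ range (M + 1),
        (((M + 1).choose m : ℚ)) * gw m
          = ∑ n ∈ range (M + 1), ((M + 1).choose m : ℚ) * ((1 / ((n : ℚ) + 1)) * Dw n m) := by
      intro m hm
      rw [Finset.mem_range] at hm
      unfold gw
      rw [Finset.mul_sum]
      apply Finset.sum_subset
      · intro x hx
        rw [Finset.mem_range] at *
        omega
      · intro x hx hnx
        rw [Finset.mem_range] at hx hnx
        rw [Dvanish x m (by omega)]
        ring
    rw [Finset.sum_congr rfl hg, Finset.sum_comm]
    have hinner : ∀ n ∈ range (M + 1),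
        ∑ m ∈ range (M + 1), ((M + 1).choose m : ℚ) * ((1 / ((n : ℚ) + 1)) * Dw n m)
          = (1 / ((n : ℚ) + 1)) * (Ew n (M + 1) - Dw n (M + 1)) := by
      intro n _
      have key : ∑ m ∈ range (M + 1), ((M + 1).choose m : ℚ) * Dw n m
          = Ew n (M + 1) - Dw n (M + 1) := by
        unfold Ew Dw
        simp_rw [Finset.mul_sum]
        rw [Finset.sum_comm, ← Finset.sum_sub_distrib]
        apply Finset.sum_congr rfl
        intro k _
        have hb : ((k : ℚ) + 1) ^ (M + 1)
            = ∑ m ∈ range (M + 2), ((M + 1).choose m : ℚ) * (k : ℚ) ^ m := by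
          rw [add_pow]
          apply Finset.sum_congr rfl
          intro m _
          ring
        have hsplit : ∑ m ∈ range (M + 2), ((M + 1).choose m : ℚ) * (k : ℚ) ^ m
            = (∑ m ∈ range (M + 1), ((M + 1).choose m : ℚ) * (k : ℚ) ^ m) + (k : ℚ) ^ (M + 1) := by
          rw [Finset.sum_range_succ, Nat.choose_self]
          push_cast
          ring
        have hsum : ∑ m ∈ range (M + 1), ((M + 1).choose m : ℚ) * (k : ℚ) ^ m
            = ((k : ℚ) + 1) ^ (M + 1) - (k : ℚ) ^ (M + 1) := by
          rw [hb, hsplit]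
          ring
        calc ∑ m ∈ range (M + 1),
              ((M + 1).choose m : ℚ) * ((-1 : ℚ) ^ k * (n.choose k : ℚ) * (k : ℚ) ^ m)
            = (-1 : ℚ) ^ k * (n.choose k : ℚ)
                * ∑ m ∈ range (M + 1), ((M + 1).choose m : ℚ) * (k : ℚ) ^ m := by
              rw [Finset.mul_sum]
              exact Finset.sum_congr rfl fun m _ => by ring
          _ = _ := by rw [hsum]; ring
      calc ∑ m ∈ range (M + 1), ((M + 1).choose m : ℚ) * ((1 / ((n : ℚ) + 1)) * Dw n m)
          = (1 / ((n : ℚ) + 1)) * ∑ m ∈ range (M + 1), ((M + 1).choose m : ℚ) * Dw n m := by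
            rw [Finset.mul_sum]
            exact Finset.sum_congr rfl fun m _ => by ring
        _ = _ := by rw [key]
    rw [Finset.sum_congr rfl hinner]
    have hterm : ∀ n ∈ range (M + 1),
        (1 / ((n : ℚ) + 1)) * (Ew n (M + 1) - Dw n (M + 1)) = Ew n M := by
      intro n _
      have h1 : Ew n (M + 1) - Dw n (M + 1) = -Dw (n + 1) (M + 1) := by
        have := pascalD n (M + 1); linarith
      rw [h1, key2]
      have hne : ((n : ℚ) + 1) ≠ 0 := by positivity
      field_simp
    rw [Finset.sum_congr rfl hterm, telescope]
    have hD0 : Dw 0 M = (0 : ℚ) ^ M := by unfold Dw; simp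
    rw [hD0, Dvanish (M + 1) M (by omega), sub_zero]
    rcases Nat.eq_zero_or_pos M with h | h
    · subst h; simp
    · rw [zero_pow (by omega), if_neg (by omega)]

private lemma g_eq_bernoulli (m : ℕ) : gw m = bernoulli m := by
  induction m using Nat.strong_induction_on with
  | _ m ih =>
    have h1 := Gsum (m + 1)
    have h2 := sum_bernoulli (m + 1)
    have h3 : ∑ j ∈ range (m + 1), ((m + 1).choose j : ℚ) * (gw j - bernoulli j) = 0 := by
      simp_rw [mul_sub]
      rw [Finset.sum_sub_distrib, h1, h2, sub_self]
    rw [Finset.sum_range_succ] at h3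
    have h4 : ∑ j ∈ range m, ((m + 1).choose j : ℚ) * (gw j - bernoulli j) = 0 := by
      apply Finset.sum_eq_zero
      intro j hj
      rw [Finset.mem_range] at hj
      rw [ih j hj]
      ring
    rw [h4, zero_add, Nat.choose_succ_self_right] at h3
    have hne : ((m + 1 : ℕ) : ℚ) ≠ 0 := by exact_mod_cast Nat.succ_ne_zero m
    rcases mul_eq_zero.mp h3 with h | h
    · exact absurd h hne
    · linarith

/-- Worpitzky's representation: for every `m ≥ 0`, the Bernoulli number `B_m`
(with `B_1 = +1/2`, i.e. `B_m = B_m(1)`) equals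
`Σ_{n=0}^m (1/(n+1))·Σ_{k=0}^n (-1)^{m-k}·C(n,k)·k^m`. -/
theorem worpitzky_representation (m : ℕ) :
    ((Polynomial.bernoulli m).eval 1 : ℚ) =
      ∑ n ∈ Finset.range (m + 1), (1 / (n + 1 : ℚ)) *
        ∑ k ∈ Finset.range (n + 1), (-1 : ℚ) ^ (m - k) * (n.choose k : ℚ) * (k : ℚ) ^ m := by
  rw [Polynomial.bernoulli_eval_one]
  have hrhs : ∑ n ∈ Finset.range (m + 1), (1 / (n + 1 : ℚ)) *
        ∑ k ∈ Finset.range (n + 1), (-1 : ℚ) ^ (m - k) * (n.choose k : ℚ) * (k : ℚ) ^ m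
      = (-1 : ℚ) ^ m * gw m := by
    unfold gw Dw
    rw [Finset.mul_sum]
    apply Finset.sum_congr rfl
    intro n hn
    rw [Finset.mem_range] at hn
    rw [Finset.mul_sum, Finset.mul_sum, Finset.mul_sum]
    apply Finset.sum_congr rfl
    intro k hk
    rw [Finset.mem_range] at hk
    have hkm : k ≤ m := by omega
    have hsign : (-1 : ℚ) ^ (m - k) = (-1 : ℚ) ^ m * (-1 : ℚ) ^ k := by
      rw [← pow_add, show m + k = (m - k) + 2 * k by omega, pow_add, pow_mul]
      simp
    rw [hsign]
    ring
  rw [hrhs, g_eq_bernoulli, bernoulli'_eq_bernoulli]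
end

section
/- For every integer n ≥ 0, Σ_{k=0}^n W(n,k)/(k+1) = B_n, where W(n,k) = (-1)^k·k!·S(n+1,k+1) are the signed Worpitzky numbers, S the Stirling numbers of the second kind, and B_n the Bernoulli numbers with B_1 = 1/2. -/
/-!
Let `P_n = Σ_k S(n+1,k+1)/(k+1) · X(X-1)⋯(X-k)`. The falling-factorial expansion
`(X+1)^n = Σ_k S(n+1,k+1) · X(X-1)⋯(X-k+1)` gives `P_n(X+1) - P_n(X) = (X+1)^n`, and `P_n(0) = 0`.
Since `B_{n+1}(X+1) - B_{n+1}(X) = (n+1) X^n`, the polynomial `B_{n+1}(X+1) - B_{n+1}(1)` has the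
same forward difference and value at `0` as `(n+1) P_n`, so the two are equal. Now compare the
coefficients of `X`: that of `X(X-1)⋯(X-k)` is `(-1)^k k!`, that of `B_{n+1}(X+1)` is
`B_{n+1}'(1) = (n+1) B_n(1)`.
-/

open Finset Polynomial

def stirling2 : ℕ → ℕ → ℕ
  | 0, 0 => 1
  | 0, _ + 1 => 0
  | _ + 1, 0 => 0
  | n + 1, k + 1 => (k + 1) * stirling2 n (k + 1) + stirling2 n k

theorem stirling2_eq_stirlingSecond : stirling2 = Nat.stirlingSecond := by
  funext n k
  induction n generalizing k with
  | zero => cases k <;> rfl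
  | succ n ih => cases k <;> simp [stirling2, Nat.stirlingSecond_succ_succ, ih]

namespace Polynomial

variable {R : Type*} [CommRing R]

theorem X_add_one_mul_descPochhammer (k : ℕ) :
    (X + 1) * descPochhammer R k = descPochhammer R (k + 1) + (k + 1) • descPochhammer R k := by
  rw [descPochhammer_succ_right]
  simp only [nsmul_eq_mul]
  push_cast
  ring

theorem descPochhammer_succ_comp_X_add_one (k : ℕ) :
    (descPochhammer R (k + 1)).comp (X + 1) = (X + 1) * descPochhammer R k := by
  rw [descPochhammer_succ_left, mul_comp, X_comp, comp_assoc, sub_comp, X_comp, one_comp,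
    add_sub_cancel_right, comp_X]

theorem X_add_one_pow_eq_sum_stirlingSecond_smul_descPochhammer (n : ℕ) :
    (X + 1 : R[X]) ^ n =
      ∑ k ∈ range (n + 1), Nat.stirlingSecond (n + 1) (k + 1) • descPochhammer R k := by
  induction n with
  | zero => simp [Nat.stirlingSecond_self]
  | succ n ih =>
    have hdiag : Nat.stirlingSecond (n + 1) (n + 2) = 0 :=
      Nat.stirlingSecond_eq_zero_of_lt (by omega)
    calc (X + 1 : R[X]) ^ (n + 1)
        = ∑ k ∈ range (n + 1), Nat.stirlingSecond (n + 1) (k + 1) •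
            (descPochhammer R (k + 1) + (k + 1) • descPochhammer R k) := by
          rw [pow_succ', ih, mul_sum]
          simp only [mul_smul_comm, X_add_one_mul_descPochhammer]
      _ = ∑ k ∈ range (n + 2), Nat.stirlingSecond (n + 1) k • descPochhammer R k +
            ∑ k ∈ range (n + 2), ((k + 1) * Nat.stirlingSecond (n + 1) (k + 1)) •
              descPochhammer R k := by
          rw [sum_range_succ' _ (n + 1), sum_range_succ _ (n + 1), hdiag,
            Nat.stirlingSecond_succ_zero]
          simp only [smul_add, sum_add_distrib, smul_smul, mul_comm, zero_smul, zero_mul, add_zero]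
      _ = _ := by
          rw [← sum_add_distrib]
          refine sum_congr rfl fun k _ => ?_
          rw [Nat.stirlingSecond_succ_succ (n + 1), add_smul, add_comm]

theorem coeff_one_descPochhammer_succ (k : ℕ) :
    (descPochhammer R (k + 1)).coeff 1 = (-1) ^ k * (Nat.factorial k : R) := by
  have hfactor (j : ℕ) : (-1 - j : R) = -((j + 1 : ℕ) : R) := by push_cast; ring
  rw [descPochhammer_succ_left, coeff_X_mul, coeff_zero_eq_eval_zero, eval_comp, eval_sub, eval_X,
    eval_one, zero_sub, descPochhammer_eval_eq_prod_range]
  simp only [hfactor, prod_neg, card_range, ← Nat.cast_prod, prod_range_add_one_eq_factorial]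

theorem eq_of_eval_zero_eq_of_comp_X_add_one_sub_eq [IsDomain R] [CharZero R] {p q : R[X]}
    (h₀ : p.eval 0 = q.eval 0) (hΔ : p.comp (X + 1) - p = q.comp (X + 1) - q) : p = q := by
  have hnat (m : ℕ) : p.eval (m : R) = q.eval (m : R) := by
    induction m with
    | zero => simpa using h₀
    | succ m ih =>
      have := congr_arg (eval (m : R)) hΔ
      simp only [eval_sub, eval_comp, eval_add, eval_X, eval_one] at this
      push_cast
      linear_combination this + ih
  refine eq_of_infinite_eval_eq p q
    (Set.Infinite.mono ?_ (Set.infinite_range_of_injective Nat.cast_injective))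
  rintro _ ⟨m, rfl⟩
  exact hnat m

end Polynomial

/-- Its value at `m : ℕ` is `1^n + 2^n + ⋯ + m^n`. -/
noncomputable def powerSumPoly (n : ℕ) : ℚ[X] :=
  ∑ k ∈ range (n + 1),
    C ((Nat.stirlingSecond (n + 1) (k + 1) : ℚ) / (k + 1)) * descPochhammer ℚ (k + 1)

theorem powerSumPoly_comp_X_add_one_sub (n : ℕ) :
    (powerSumPoly n).comp (X + 1) - powerSumPoly n = (X + 1) ^ n := by
  rw [X_add_one_pow_eq_sum_stirlingSecond_smul_descPochhammer, powerSumPoly, Polynomial.sum_comp,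
    ← sum_sub_distrib]
  refine sum_congr rfl fun k _ => ?_
  rw [mul_comp, C_comp, descPochhammer_succ_comp_X_add_one, X_add_one_mul_descPochhammer,
    ← mul_sub, add_sub_cancel_left, nsmul_eq_mul, nsmul_eq_mul, ← mul_assoc, ← C_eq_natCast,
    ← C_eq_natCast, ← C_mul]
  congr 2
  field_simp
  push_cast
  ring

theorem powerSumPoly_eval_zero (n : ℕ) : (powerSumPoly n).eval 0 = 0 := by
  simp [powerSumPoly, eval_finsetSum, descPochhammer_ne_zero_eval_zero]

theorem coeff_one_powerSumPoly (n : ℕ) :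
    (powerSumPoly n).coeff 1 = ∑ k ∈ range (n + 1),
      (-1) ^ k * (Nat.factorial k : ℚ) * Nat.stirlingSecond (n + 1) (k + 1) / (k + 1) := by
  rw [powerSumPoly, finsetSum_coeff]
  refine sum_congr rfl fun k _ => ?_
  rw [coeff_C_mul, coeff_one_descPochhammer_succ]
  ring

theorem C_mul_powerSumPoly (n : ℕ) :
    C ((n : ℚ) + 1) * powerSumPoly n =
      taylor 1 (Polynomial.bernoulli (n + 1)) - C ((Polynomial.bernoulli (n + 1)).eval 1) := by
  apply eq_of_eval_zero_eq_of_comp_X_add_one_sub_eq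
  · simp [powerSumPoly_eval_zero, taylor_eval]
  · have hB := congr_arg (·.comp (X + 1)) (bernoulli_comp_one_add_X (n + 1))
    simp only [comp_assoc, add_comp, one_comp, X_comp, add_comm 1 (X + 1), nsmul_eq_mul, mul_comp,
      natCast_comp, X_pow_comp] at hB
    rw [mul_comp, C_comp, ← mul_sub, powerSumPoly_comp_X_add_one_sub, sub_comp, C_comp,
      sub_sub_sub_cancel_right, taylor_apply, C_1, comp_assoc, add_comp, X_comp, one_comp, hB,
      Nat.add_sub_cancel, map_add, map_natCast, map_one]
    push_cast
    ring

/-- For every `n ≥ 0`, `Σ_{k=0}^n W(n,k)/(k+1) = B_n`, where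
`W(n,k) = (-1)^k·k!·S(n+1,k+1)` are the signed Worpitzky numbers and `B_n` are the
Bernoulli numbers with `B_1 = 1/2` (i.e. `B_n = B_n(1)`). -/
theorem worpitzky_sum_eq_bernoulli (n : ℕ) :
    ∑ k ∈ Finset.range (n + 1),
        ((-1 : ℚ) ^ k * (Nat.factorial k : ℚ) * (stirling2 (n + 1) (k + 1) : ℚ)) / (k + 1) =
      (Polynomial.bernoulli n).eval 1 := by
  have hcoeff := congr_arg (coeff · 1) (C_mul_powerSumPoly n)
  simp only [coeff_C_mul, coeff_sub, coeff_C, taylor_coeff_one, derivative_bernoulli_add_one,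
    eval_mul, eval_add, eval_natCast, eval_one, one_ne_zero, if_false, sub_zero] at hcoeff
  rw [stirling2_eq_stirlingSecond, ← coeff_one_powerSumPoly]
  exact mul_left_cancel₀ (by positivity) hcoeff
end

section
/- For every integer n ≥ 0, the integral of the Fubini polynomial F_n(x) = Σ_{k=0}^n (-1)^{n-k}·k!·S(n,k)·x^k over [0,1] equals the Bernoulli number B_n (with B_1 = 1/2), and likewise ∫_0^1 F_n(1-x) dx = B_n. -/
open Finset

lemma stirling2_zero_succ (k : ℕ) : stirling2 0 (k+1) = 0 := rfl
lemma stirling2_succ_zero (n : ℕ) : stirling2 (n+1) 0 = 0 := rfl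
lemma stirling2_succ_succ (n k : ℕ) :
    stirling2 (n+1) (k+1) = (k + 1) * stirling2 n (k + 1) + stirling2 n k := rfl

lemma stirling2_eq_zero : ∀ {n k : ℕ}, n < k → stirling2 n k = 0 := by
  intro n
  induction n with
  | zero =>
    intro k h
    cases k with
    | zero => omega
    | succ k => rfl
  | succ n ih =>
    intro k h
    cases k with
    | zero => omega
    | succ k =>
      rw [stirling2_succ_succ, ih (by omega : n < k + 1), ih (by omega : n < k)]
      simp

lemma binom_stirling (n : ℕ) : ∀ j : ℕ,
    stirling2 (n+1) (j+1) = ∑ k ∈ range (n+1), n.choose k * stirling2 k j := by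
  induction n with
  | zero =>
    intro j
    cases j <;> simp [stirling2_succ_succ, stirling2_zero_succ, stirling2]
  | succ n ih =>
    intro j
    have key : ∑ k ∈ range (n+2), (n+1).choose k * stirling2 k j
        = (∑ k ∈ range (n+1), n.choose k * stirling2 (k+1) j)
          + ∑ k ∈ range (n+1), n.choose k * stirling2 k j := by
      rw [Finset.sum_range_succ' _ (n+1)]
      have h1 : ∀ k ∈ range (n+1), (n+1).choose (k+1) * stirling2 (k+1) j
          = n.choose k * stirling2 (k+1) j + n.choose (k+1) * stirling2 (k+1) j := by
        intro k _
        rw [Nat.choose_succ_succ, add_mul]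
      rw [Finset.sum_congr rfl h1, Finset.sum_add_distrib]
      have h2 : ∑ k ∈ range (n+1), n.choose (k+1) * stirling2 (k+1) j
          + (n+1).choose 0 * stirling2 0 j
          = ∑ k ∈ range (n+2), n.choose k * stirling2 k j := by
        rw [Finset.sum_range_succ' _ (n+1)]
        simp
      have h3 : ∑ k ∈ range (n+2), n.choose k * stirling2 k j
          = ∑ k ∈ range (n+1), n.choose k * stirling2 k j := by
        rw [Finset.sum_range_succ, Nat.choose_succ_self, zero_mul, add_zero]
      omega
    rw [key, ← ih j]
    cases j with
    | zero =>
      have : ∀ k ∈ range (n+1), n.choose k * stirling2 (k+1) 0 = 0 := by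
        intro k _; rw [stirling2_succ_zero, mul_zero]
      rw [Finset.sum_congr rfl this, Finset.sum_const_zero, zero_add,
        stirling2_succ_succ (n+1) 0, stirling2_succ_succ n 0, stirling2_succ_zero]
      ring
    | succ j =>
      have : ∀ k ∈ range (n+1), n.choose k * stirling2 (k+1) (j+1)
          = (j+1) * (n.choose k * stirling2 k (j+1)) + n.choose k * stirling2 k j := by
        intro k _; rw [stirling2_succ_succ]; ring
      rw [Finset.sum_congr rfl this, Finset.sum_add_distrib, ← Finset.mul_sum, ← ih (j+1),
        ← ih j, stirling2_succ_succ (n+1) (j+1), stirling2_succ_succ n (j+1)]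
      ring

lemma clog (n : ℕ) :
    ∑ j ∈ range (n+1), (-1:ℚ)^j * j.factorial * stirling2 n (j+1)
      = if n = 1 then 1 else 0 := by
  induction n with
  | zero => simp [stirling2_zero_succ]
  | succ n _ =>
    have expand : ∀ j ∈ range (n+2), (-1:ℚ)^j * j.factorial * (stirling2 (n+1) (j+1) : ℚ)
        = (-1:ℚ)^j * (j+1).factorial * stirling2 n (j+1)
          + (-1:ℚ)^j * j.factorial * stirling2 n j := by
      intro j _
      rw [stirling2_succ_succ, Nat.factorial_succ]
      push_cast
      ring
    rw [Finset.sum_congr rfl expand, Finset.sum_add_distrib]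
    have h1 : ∑ j ∈ range (n+2), (-1:ℚ)^j * (j+1).factorial * stirling2 n (j+1)
        = ∑ j ∈ range (n+1), (-1:ℚ)^j * (j+1).factorial * stirling2 n (j+1) := by
      rw [Finset.sum_range_succ, stirling2_eq_zero (by omega : n < n + 2)]
      simp
    have h2 : ∑ j ∈ range (n+2), (-1:ℚ)^j * j.factorial * stirling2 n j
        = -∑ j ∈ range (n+1), (-1:ℚ)^j * (j+1).factorial * stirling2 n (j+1)
          + (if n = 0 then 1 else 0) := by
      rw [Finset.sum_range_succ' _ (n+1), ← Finset.sum_neg_distrib]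
      congr 1
      · apply Finset.sum_congr rfl
        intro j _
        push_cast [pow_succ]
        ring
      · cases n with
        | zero => norm_num [stirling2]
        | succ n => simp [stirling2_succ_zero]
    rw [h1, h2]
    cases n with
    | zero => norm_num
    | succ n => norm_num

/-- `A n = ∑ (-1)^j j! S(n,j)/(j+1)`, which will turn out to be `bernoulli n`. -/
noncomputable def fubA (n : ℕ) : ℚ :=
  ∑ j ∈ range (n+1), (-1:ℚ)^j * j.factorial * stirling2 n j / (j+1)

lemma fubA_eq_big (n m : ℕ) (h : n ≤ m) :
    fubA n = ∑ j ∈ range (m+1), (-1:ℚ)^j * j.factorial * stirling2 n j / (j+1) := by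
  unfold fubA
  apply Finset.sum_subset
  · intro x hx
    simp only [mem_range] at *
    omega
  · intro x _ hx
    simp only [mem_range] at hx
    rw [stirling2_eq_zero (by omega : n < x)]
    simp

lemma keyA (n : ℕ) :
    ∑ k ∈ range (n+1), (n.choose k : ℚ) * fubA k
      = fubA n + (if n = 1 then 1 else 0) := by
  have step1 : ∑ k ∈ range (n+1), (n.choose k : ℚ) * fubA k
      = ∑ j ∈ range (n+1), (-1:ℚ)^j * j.factorial / (j+1)
          * (stirling2 (n+1) (j+1) : ℚ) := by
    have : ∀ k ∈ range (n+1), (n.choose k : ℚ) * fubA k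
        = ∑ j ∈ range (n+1),
            (n.choose k : ℚ) * ((-1:ℚ)^j * j.factorial * stirling2 k j / (j+1)) := by
      intro k hk
      simp only [mem_range] at hk
      rw [fubA_eq_big k n (by omega), Finset.mul_sum]
    rw [Finset.sum_congr rfl this, Finset.sum_comm]
    apply Finset.sum_congr rfl
    intro j _
    rw [binom_stirling n j]
    push_cast
    rw [Finset.mul_sum]
    apply Finset.sum_congr rfl
    intro k _
    ring
  have step2 : ∀ j ∈ range (n+1), (-1:ℚ)^j * j.factorial / (j+1)
        * (stirling2 (n+1) (j+1) : ℚ)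
      = (-1:ℚ)^j * j.factorial * stirling2 n (j+1)
        + (-1:ℚ)^j * j.factorial * stirling2 n j / (j+1) := by
    intro j _
    rw [stirling2_succ_succ]
    have hj : ((j:ℚ) + 1) ≠ 0 := by positivity
    push_cast
    field_simp
  rw [step1, Finset.sum_congr rfl step2, Finset.sum_add_distrib, clog n, ← fubA_eq_big n n le_rfl]
  ring

lemma fubA_eq_bernoulli (n : ℕ) : fubA n = bernoulli n := by
  induction n using Nat.strong_induction_on with
  | _ n ih =>
    have hA := keyA (n+1)
    rw [Finset.sum_range_succ, Nat.choose_self, Nat.cast_one, one_mul] at hA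
    have hA' : ∑ k ∈ range (n+1), ((n+1).choose k : ℚ) * fubA k = if n + 1 = 1 then 1 else 0 := by
      linarith
    have hB := sum_bernoulli (n+1)
    rw [Finset.sum_range_succ] at hA' hB
    have hsum : ∑ k ∈ range n, ((n+1).choose k : ℚ) * fubA k
        = ∑ k ∈ range n, ((n+1).choose k : ℚ) * bernoulli k := by
      apply Finset.sum_congr rfl
      intro k hk
      rw [ih k (mem_range.mp hk)]
    rw [hsum] at hA'
    have hchoose : ((n+1).choose n : ℚ) = n + 1 := by
      rw [Nat.choose_succ_self_right]
      push_cast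
      ring
    rw [hchoose] at hA' hB
    have : ((n:ℚ) + 1) ≠ 0 := by positivity
    have h : ((n:ℚ) + 1) * fubA n = ((n:ℚ) + 1) * bernoulli n := by linarith
    exact mul_left_cancel₀ this h

lemma neg_pow_mul_bernoulli (n : ℕ) : (-1:ℚ)^n * bernoulli n = bernoulli' n := by
  rcases eq_or_ne n 1 with rfl | hn
  · norm_num [bernoulli_one, bernoulli'_one]
  · rw [bernoulli_eq_bernoulli'_of_ne_one hn]
    rcases Nat.even_or_odd n with he | ho
    · rw [he.neg_one_pow, one_mul]
    · rcases eq_or_ne n 0 with rfl | h0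
      · norm_num
      · rw [bernoulli'_eq_zero_of_odd ho (by omega), mul_zero]

lemma finalQ (n : ℕ) :
    ∑ k ∈ range (n+1), (-1:ℚ)^(n-k) * k.factorial * stirling2 n k / (k+1)
      = bernoulli' n := by
  have : ∀ k ∈ range (n+1), (-1:ℚ)^(n-k) * k.factorial * stirling2 n k / (k+1)
      = (-1:ℚ)^n * ((-1:ℚ)^k * k.factorial * stirling2 n k / (k+1)) := by
    intro k hk
    simp only [mem_range] at hk
    have : (-1:ℚ)^(n-k) * (-1:ℚ)^k = (-1:ℚ)^n := by
      rw [← pow_add, Nat.sub_add_cancel (by omega)]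
    have h2 : (-1:ℚ)^(n-k) = (-1:ℚ)^n * (-1:ℚ)^k := by
      have hk2 : (-1:ℚ)^k * (-1:ℚ)^k = 1 := by
        rw [← pow_add, ← two_mul, pow_mul]
        norm_num
      calc (-1:ℚ)^(n-k) = (-1:ℚ)^(n-k) * ((-1:ℚ)^k * (-1:ℚ)^k) := by rw [hk2, mul_one]
        _ = (-1:ℚ)^n * (-1:ℚ)^k := by rw [← mul_assoc, this]
    rw [h2]
    ring
  rw [Finset.sum_congr rfl this, ← Finset.mul_sum, ← fubA, fubA_eq_bernoulli,
    neg_pow_mul_bernoulli]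

/-- The integral over `[0,1]` of the Fubini polynomial
`F_n(x) = Σ_{k=0}^n (-1)^{n-k}·k!·S(n,k)·x^k` equals the Bernoulli number `B_n`
(with `B_1 = 1/2`), and likewise for `∫_0^1 F_n(1-x) dx`. -/
theorem fubini_poly_integral_eq_bernoulli (n : ℕ) :
    (∫ x in (0:ℝ)..1, ∑ k ∈ Finset.range (n + 1),
        (-1 : ℝ) ^ (n - k) * (Nat.factorial k : ℝ) * (stirling2 n k : ℝ) * x ^ k) =
      (((Polynomial.bernoulli n).eval 1 : ℚ) : ℝ) ∧
    (∫ x in (0:ℝ)..1, ∑ k ∈ Finset.range (n + 1),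
        (-1 : ℝ) ^ (n - k) * (Nat.factorial k : ℝ) * (stirling2 n k : ℝ) * (1 - x) ^ k) =
      (((Polynomial.bernoulli n).eval 1 : ℚ) : ℝ) := by
  have hval : (((Polynomial.bernoulli n).eval 1 : ℚ) : ℝ) = ((bernoulli' n : ℚ) : ℝ) := by
    rw [Polynomial.bernoulli_eval_one]
  have h1 : (∫ x in (0:ℝ)..1, ∑ k ∈ Finset.range (n + 1),
      (-1 : ℝ) ^ (n - k) * (Nat.factorial k : ℝ) * (stirling2 n k : ℝ) * x ^ k)
      = ((bernoulli' n : ℚ) : ℝ) := by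
    rw [intervalIntegral.integral_finset_sum]
    · have : ∀ k ∈ Finset.range (n+1),
          (∫ x in (0:ℝ)..1, (-1 : ℝ) ^ (n - k) * (Nat.factorial k : ℝ)
            * (stirling2 n k : ℝ) * x ^ k)
          = (-1 : ℝ) ^ (n - k) * (Nat.factorial k : ℝ) * (stirling2 n k : ℝ) / (k+1) := by
        intro k _
        rw [intervalIntegral.integral_const_mul, integral_pow]
        norm_num
        ring
      rw [Finset.sum_congr rfl this]
      have := finalQ n
      have := congrArg (fun q : ℚ => (q : ℝ)) this
      push_cast at this
      convert this using 2
    · intro k _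
      exact (Continuous.intervalIntegrable (by continuity) 0 1)
  refine ⟨hval ▸ h1, ?_⟩
  have h2 : (∫ x in (0:ℝ)..1, ∑ k ∈ Finset.range (n + 1),
      (-1 : ℝ) ^ (n - k) * (Nat.factorial k : ℝ) * (stirling2 n k : ℝ) * (1 - x) ^ k)
      = ∫ x in (0:ℝ)..1, ∑ k ∈ Finset.range (n + 1),
        (-1 : ℝ) ^ (n - k) * (Nat.factorial k : ℝ) * (stirling2 n k : ℝ) * x ^ k := by
    have := intervalIntegral.integral_comp_sub_left (a := (0:ℝ)) (b := 1)
      (fun y => ∑ k ∈ Finset.range (n + 1),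
        (-1 : ℝ) ^ (n - k) * (Nat.factorial k : ℝ) * (stirling2 n k : ℝ) * y ^ k) 1
    simpa using this
  rw [h2, hval]
  exact h1
end
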